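/- arXiv:1810.09675 — 3 statements merged into one kernel-verified Lean document; each statement's English description precedes it below -/
import Mathlib

section
/- Let ω > 0, let (r_i, s_i) ∈ ℝ² × ℝ² and x_j ∈ ℝ² be fixed centers, and let D_i = {(r,s) ∈ ℝ² × ℝ² : |(s−r) − (s_i−r_i)| ≤ 1/√ω} and X_j = {x ∈ ℝ² : |x − x_j| ≤ 1/√ω}. Then for every integer t ≥ 1 there exist m ≤ t(t+1)/2 and functions u_1,…,u_m : ℝ² × ℝ² → ℂ and v_1,…,v_m : ℝ² → ℂ such that for all (r,s) ∈ D_i and all x ∈ X_j, |exp(iω(s−r)·x) − Σ_{k=1}^{m} u_k(r,s) v_k(x)| ≤ e/t!. In particular, to achieve uniform accuracy ε the separation rank needed is polylogarithmic in 1/ε and independent of ω, so the kernel exp(iω(s−r)·x) restricted to D_i × X_j is numerically low-rank. -/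
/-!
Write `s - r = c + d` with `c = sᵢ - rᵢ` and `x = xⱼ + y`. Then
`⟪s - r, x⟫ = ⟪s - r, xⱼ⟫ + ⟪c, y⟫ + ⟪d, y⟫`, so the kernel is a unimodular factor depending on
`(r, s)` alone, times one depending on `x` alone, times `exp (i ω ⟪d, y⟫)`. Since
`|ω ⟪d, y⟫| ≤ ω |d| |y| ≤ 1`, truncating the exponential series after `t` terms costs at most
`e / t!`, and by the binomial theorem in the two coordinates the term `⟪d, y⟫ ^ n` is a sum of
`n + 1` products of a monomial in `d` and a monomial in `y`: `∑_{n < t} (n + 1) = t (t + 1) / 2`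
separated terms in all.
-/

open Complex Finset
open scoped Nat
open scoped RealInnerProductSpace

theorem Complex.norm_exp_sub_sum_range_le {z : ℂ} (hz : ‖z‖ ≤ 1) (t : ℕ) :
    ‖exp z - ∑ n ∈ range t, z ^ n / (n ! : ℂ)‖ ≤ Real.exp 1 / t ! := by
  rcases t.eq_zero_or_pos with rfl | ht
  · simpa using (norm_exp_le_exp_norm z).trans (Real.exp_le_exp.2 hz)
  have hsucc : (t.succ : ℝ) / t ≤ Real.exp 1 := by
    have ht' : (1 : ℝ) ≤ t := by exact_mod_cast ht
    rw [div_le_iff₀ (by positivity)]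
    push_cast
    nlinarith [Real.add_one_le_exp 1]
  calc ‖exp z - ∑ n ∈ range t, z ^ n / (n ! : ℂ)‖
      ≤ ‖z‖ ^ t * ((t.succ : ℝ) * ((t ! : ℝ) * t)⁻¹) := exp_bound hz ht
    _ = ‖z‖ ^ t * ((t.succ : ℝ) / t / t !) := by field_simp
    _ ≤ 1 * (Real.exp 1 / t !) := by gcongr; exact pow_le_one₀ (norm_nonneg z) hz
    _ = Real.exp 1 / t ! := one_mul _

theorem Complex.norm_exp_I_mul_mul_ofReal (ω a : ℝ) : ‖exp (I * ω * a)‖ = 1 := by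
  rw [mul_assoc, ← ofReal_mul, norm_exp_I_mul_ofReal]

section InnerProductSpace

variable {E : Type*} [NormedAddCommGroup E] [InnerProductSpace ℝ E]

theorem real_inner_eq_inner_add_inner_sub_add_inner_sub (k c x x₀ : E) :
    ⟪k, x⟫ = ⟪k, x₀⟫ + ⟪c, x - x₀⟫ + ⟪k - c, x - x₀⟫ := by
  simp only [inner_sub_left, inner_sub_right]
  ring

theorem exp_I_mul_inner_eq_mul_mul (ω : ℝ) (k c x x₀ : E) :
    exp (I * ω * ⟪k, x⟫) =
      exp (I * ω * ⟪k, x₀⟫) * exp (I * ω * ⟪c, x - x₀⟫) * exp (I * ω * ⟪k - c, x - x₀⟫) := by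
  rw [← exp_add, ← exp_add, real_inner_eq_inner_add_inner_sub_add_inner_sub k c x x₀]
  push_cast
  ring_nf

theorem norm_I_mul_mul_inner_le_one {ω : ℝ} (hω : 0 < ω) {d y : E}
    (hd : ‖d‖ ≤ 1 / √ω) (hy : ‖y‖ ≤ 1 / √ω) : ‖I * ω * ⟪d, y⟫‖ ≤ 1 := by
  rw [norm_mul, norm_mul, norm_I, one_mul, norm_real, norm_real, Real.norm_of_nonneg hω.le]
  calc ω * ‖⟪d, y⟫‖ ≤ ω * (‖d‖ * ‖y‖) := by gcongr; exact norm_inner_le_norm d y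
    _ ≤ ω * (1 / √ω * (1 / √ω)) := by gcongr
    _ = 1 := by
      rw [div_mul_div_comm, one_mul, Real.mul_self_sqrt hω.le]
      field_simp

end InnerProductSpace

def monomial2 (n j : ℕ) (v : EuclideanSpace ℝ (Fin 2)) : ℝ := v 0 ^ j * v 1 ^ (n - j)

theorem real_inner_pow_eq_sum_choose_mul_monomial2 (d y : EuclideanSpace ℝ (Fin 2)) (n : ℕ) :
    ⟪d, y⟫ ^ n = ∑ j ∈ range (n + 1), n.choose j * (monomial2 n j d * monomial2 n j y) := by
  have hinner : ⟪d, y⟫ = d 0 * y 0 + d 1 * y 1 := by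
    simp [PiLp.inner_apply, Fin.sum_univ_two, mul_comm]
  rw [hinner, add_pow]
  refine sum_congr rfl fun j _ => ?_
  simp only [monomial2, mul_pow]
  ring

def monomialIndex (t : ℕ) : Finset (Σ _ : ℕ, ℕ) := (range t).sigma fun n => range (n + 1)

theorem card_monomialIndex (t : ℕ) : #(monomialIndex t) = t * (t + 1) / 2 := by
  rw [monomialIndex, card_sigma]
  simp only [card_range]
  have h := sum_range_succ' (fun i => i) t
  rw [add_zero] at h
  rw [← h, sum_range_id, Nat.add_sub_cancel, Nat.mul_comm]

theorem sum_range_mul_inner_pow_div_factorial_eq (a : ℂ) (d y : EuclideanSpace ℝ (Fin 2))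
    (t : ℕ) :
    ∑ n ∈ range t, (a * ⟪d, y⟫) ^ n / n ! =
      ∑ i ∈ monomialIndex t,
        a ^ i.1 / i.1 ! * i.1.choose i.2 * monomial2 i.1 i.2 d * monomial2 i.1 i.2 y := by
  rw [monomialIndex, sum_sigma]
  refine sum_congr rfl fun n _ => ?_
  rw [mul_pow, ← ofReal_pow, real_inner_pow_eq_sum_choose_mul_monomial2]
  push_cast
  rw [mul_sum, sum_div]
  refine sum_congr rfl fun j _ => ?_
  ring

theorem Finset.exists_sum_fin_card_mul_eq {ι α β R : Type*} [CommSemiring R] (s : Finset ι)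
    (u : ι → α → R) (v : ι → β → R) :
    ∃ (u' : Fin #s → α → R) (v' : Fin #s → β → R),
      ∀ a b, ∑ k, u' k a * v' k b = ∑ i ∈ s, u i a * v i b :=
  ⟨fun k => u (s.equivFin.symm k), fun k => v (s.equivFin.symm k), fun a b => by
    rw [← s.sum_coe_sort, ← s.equivFin.symm.sum_comp]⟩

theorem farfield_kernel_low_rank_general (ω : ℝ) (hω : 0 < ω)
    (ri si xj : EuclideanSpace ℝ (Fin 2))
    (Di : Set (EuclideanSpace ℝ (Fin 2) × EuclideanSpace ℝ (Fin 2)))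
    (Xj : Set (EuclideanSpace ℝ (Fin 2)))
    (hDi : Di = {p | ‖(p.2 - p.1) - (si - ri)‖ ≤ 1 / Real.sqrt ω})
    (hXj : Xj = {x | ‖x - xj‖ ≤ 1 / Real.sqrt ω})
    (t : ℕ) :
    ∃ m : ℕ, m ≤ t * (t + 1) / 2 ∧
      ∃ (u : Fin m → EuclideanSpace ℝ (Fin 2) × EuclideanSpace ℝ (Fin 2) → ℂ)
        (v : Fin m → EuclideanSpace ℝ (Fin 2) → ℂ),
        ∀ p ∈ Di, ∀ x ∈ Xj,
          ‖Complex.exp (Complex.I * ω * (⟪p.2 - p.1, x⟫ : ℝ)) -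
              ∑ k : Fin m, u k p * v k x‖ ≤
            Real.exp 1 / (Nat.factorial t : ℝ) := by
  subst hDi hXj
  obtain ⟨u, v, huv⟩ := (monomialIndex t).exists_sum_fin_card_mul_eq
    (fun i (p : EuclideanSpace ℝ (Fin 2) × EuclideanSpace ℝ (Fin 2)) =>
      exp (I * ω * ⟪p.2 - p.1, xj⟫) * ((I * ω) ^ i.1 / (i.1 ! : ℂ)) * i.1.choose i.2 *
        monomial2 i.1 i.2 (p.2 - p.1 - (si - ri)))
    (fun i x => exp (I * ω * ⟪si - ri, x - xj⟫) * monomial2 i.1 i.2 (x - xj))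
  refine ⟨_, (card_monomialIndex t).le, u, v, fun p hp x hx => ?_⟩
  have hsum : ∑ k, u k p * v k x = exp (I * ω * ⟪p.2 - p.1, xj⟫) *
      exp (I * ω * ⟪si - ri, x - xj⟫) *
        ∑ n ∈ range t, (I * ω * ⟪p.2 - p.1 - (si - ri), x - xj⟫) ^ n / (n ! : ℂ) := by
    rw [huv, sum_range_mul_inner_pow_div_factorial_eq, mul_sum]
    exact sum_congr rfl fun _ _ => by ring
  rw [hsum, exp_I_mul_inner_eq_mul_mul ω _ (si - ri) x xj, ← mul_sub, norm_mul, norm_mul,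
    norm_exp_I_mul_mul_ofReal, norm_exp_I_mul_mul_ofReal, one_mul, one_mul]
  exact norm_exp_sub_sum_range_le (norm_I_mul_mul_inner_le_one hω hp hx) t

/-- Theorem 1 of the paper (precise form): let `ω > 0`, let `(rᵢ, sᵢ)` and `xⱼ` be fixed
centers, and let `Dᵢ = {(r,s) : |(s−r) − (sᵢ−rᵢ)| ≤ 1/√ω}` and
`Xⱼ = {x : |x − xⱼ| ≤ 1/√ω}`. Then for every integer `t ≥ 1` there exist
`m ≤ t(t+1)/2` and functions `u₁,…,u_m : ℝ²×ℝ² → ℂ`, `v₁,…,v_m : ℝ² → ℂ` such that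
for all `(r,s) ∈ Dᵢ` and all `x ∈ Xⱼ`,
`|exp(iω(s−r)·x) − Σ_k u_k(r,s) v_k(x)| ≤ e/t!`. -/
theorem farfield_kernel_low_rank (ω : ℝ) (hω : 0 < ω)
    (ri si xj : EuclideanSpace ℝ (Fin 2))
    (Di : Set (EuclideanSpace ℝ (Fin 2) × EuclideanSpace ℝ (Fin 2)))
    (Xj : Set (EuclideanSpace ℝ (Fin 2)))
    (hDi : Di = {p | ‖(p.2 - p.1) - (si - ri)‖ ≤ 1 / Real.sqrt ω})
    (hXj : Xj = {x | ‖x - xj‖ ≤ 1 / Real.sqrt ω})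
    (t : ℕ) (ht : 1 ≤ t) :
    ∃ m : ℕ, m ≤ t * (t + 1) / 2 ∧
      ∃ (u : Fin m → EuclideanSpace ℝ (Fin 2) × EuclideanSpace ℝ (Fin 2) → ℂ)
        (v : Fin m → EuclideanSpace ℝ (Fin 2) → ℂ),
        ∀ p ∈ Di, ∀ x ∈ Xj,
          ‖Complex.exp (Complex.I * ω * (⟪p.2 - p.1, x⟫ : ℝ)) -
              ∑ k : Fin m, u k p * v k x‖ ≤
            Real.exp 1 / (Nat.factorial t : ℝ) :=
  farfield_kernel_low_rank_general ω hω ri si xj Di Xj hDi hXj t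
end

section
/- Let a, b ∈ ℝ² with |a·b| ≤ 1 and let t ≥ 1 be an integer. Then there exist m ≤ t(t+1)/2 and functions u_1,…,u_m : ℝ² → ℂ and v_1,…,v_m : ℝ² → ℂ (explicitly, scalar multiples of the monomials a ↦ a₁^l a₂^{k−l} and b ↦ b₁^l b₂^{k−l} for 0 ≤ l ≤ k ≤ t−1) such that |exp(i a·b) − Σ_{k=1}^{m} u_k(a) v_k(b)| ≤ e/t! for all such a, b. Hence on any set of pairs (a,b) with |a·b| ≤ 1, the kernel exp(i a·b) admits a separable approximation of rank t(t+1)/2 with uniform error at most e/t!. -/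
/-!
The Taylor polynomial of degree `t - 1` of `exp` approximates `exp (i a·b)` to within `e / t!`
when `|a·b| ≤ 1`. Writing `a·b = a₀b₀ + a₁b₁`, the binomial theorem splits each term
`(i a·b)^k / k!` into the `k + 1` products `(i a₀b₀)^p / p! · (i a₁b₁)^q / q!` with `p + q = k`,
each a function of `a` times a function of `b`; there are `1 + 2 + ⋯ + t = t(t+1)/2` of them.
-/

open Complex Finset
open scoped Nat RealInnerProductSpace

theorem add_pow_div_factorial {K : Type*} [Field K] [CharZero K] (x y : K) (n : ℕ) :
    (x + y) ^ n / n ! = ∑ p ∈ antidiagonal n, x ^ p.1 / p.1 ! * (y ^ p.2 / p.2 !) := by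
  rw [(Commute.all x y).add_pow', sum_div]
  refine sum_congr rfl fun p hp => ?_
  obtain rfl := mem_antidiagonal.1 hp
  rw [← Nat.add_choose_mul_factorial_mul_factorial p.1 p.2, Nat.choose_symm_add, nsmul_eq_mul]
  have hchoose : ((p.1 + p.2).choose p.2 : K) ≠ 0 := by
    exact_mod_cast (Nat.choose_pos (Nat.le_add_left _ _)).ne'
  push_cast
  field_simp

theorem Complex.norm_exp_sub_sum_range_le_exp_one_div_factorial {x : ℂ} (hx : ‖x‖ ≤ 1) (n : ℕ) :
    ‖exp x - ∑ m ∈ range n, x ^ m / (m !)‖ ≤ Real.exp 1 / n ! := by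
  rcases n.eq_zero_or_pos with rfl | hn
  · simpa using (norm_exp_le_exp_norm x).trans (Real.exp_le_exp.2 hx)
  have hn' : (1 : ℝ) ≤ n := by exact_mod_cast hn
  calc ‖exp x - ∑ m ∈ range n, x ^ m / (m !)‖ ≤ ‖x‖ ^ n * (n.succ * ((n ! : ℝ) * n)⁻¹) :=
        exp_bound hx hn
    _ = ‖x‖ ^ n * ((1 + (n : ℝ)⁻¹) / n !) := by
        field_simp
        push_cast
        ring
    _ ≤ 1 * (2 / n !) := by
        gcongr
        · exact pow_le_one₀ (norm_nonneg x) hx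
        · linarith [inv_le_one_of_one_le₀ hn']
    _ ≤ Real.exp 1 / n ! := by
        rw [one_mul]
        gcongr
        linarith [Real.exp_one_gt_d9]

theorem card_sigma_range_antidiagonal (t : ℕ) :
    ((range t).sigma antidiagonal).card = t * (t + 1) / 2 := by
  rw [card_sigma]
  simp_rw [Nat.card_antidiagonal]
  rw [← add_zero (∑ k ∈ range t, (k + 1)), ← sum_range_succ' (fun k => k), sum_range_id,
    Nat.add_sub_cancel, mul_comm]

theorem Finset.exists_fin_sum_mul_eq {ι α β R : Type*} [Mul R] [AddCommMonoid R]
    (s : Finset ι) (f : ι → α → R) (g : ι → β → R) :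
    ∃ (u : Fin s.card → α → R) (v : Fin s.card → β → R),
      ∀ a b, ∑ k, u k a * v k b = ∑ i ∈ s, f i a * g i b :=
  ⟨fun k => f (s.equivFin.symm k), fun k => g (s.equivFin.symm k), fun a b => by
    rw [← s.sum_coe_sort, ← s.equivFin.symm.sum_comp]⟩

theorem EuclideanSpace.inner_fin_two (a b : EuclideanSpace ℝ (Fin 2)) :
    ⟪a, b⟫ = a 0 * b 0 + a 1 * b 1 := by
  simp [PiLp.inner_apply, Fin.sum_univ_two, mul_comm]

noncomputable def planeMonomial (p : ℕ × ℕ) (x : EuclideanSpace ℝ (Fin 2)) : ℂ :=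
  x 0 ^ p.1 * x 1 ^ p.2

theorem sum_range_I_mul_inner_pow_div_factorial (a b : EuclideanSpace ℝ (Fin 2)) (t : ℕ) :
    ∑ k ∈ range t, (I * (⟪a, b⟫ : ℝ)) ^ k / (k ! : ℂ) =
      ∑ p ∈ (range t).sigma antidiagonal,
        I ^ p.1 / (p.2.1 ! * p.2.2 ! : ℂ) * planeMonomial p.2 a * planeMonomial p.2 b := by
  rw [sum_sigma]
  refine sum_congr rfl fun k _ => ?_
  rw [EuclideanSpace.inner_fin_two, ofReal_add, ofReal_mul, ofReal_mul, mul_add,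
    add_pow_div_factorial]
  refine sum_congr rfl fun p hp => ?_
  obtain rfl := mem_antidiagonal.1 hp
  simp only [planeMonomial]
  field_simp
  ring

theorem inner_exp_separable_approx_general (t : ℕ) :
    ∃ m : ℕ, m ≤ t * (t + 1) / 2 ∧
      ∃ (u : Fin m → EuclideanSpace ℝ (Fin 2) → ℂ)
        (v : Fin m → EuclideanSpace ℝ (Fin 2) → ℂ),
        ∀ a b : EuclideanSpace ℝ (Fin 2), |⟪a, b⟫| ≤ 1 →
          ‖Complex.exp (Complex.I * (⟪a, b⟫ : ℝ)) - ∑ k : Fin m, u k a * v k b‖ ≤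
            Real.exp 1 / (Nat.factorial t : ℝ) := by
  obtain ⟨u, v, huv⟩ := ((range t).sigma antidiagonal).exists_fin_sum_mul_eq
    (fun p a => I ^ p.1 / (p.2.1 ! * p.2.2 ! : ℂ) * planeMonomial p.2 a)
    (fun p b => planeMonomial p.2 b)
  refine ⟨_, (card_sigma_range_antidiagonal t).le, u, v, fun a b hab => ?_⟩
  rw [huv, ← sum_range_I_mul_inner_pow_div_factorial]
  apply norm_exp_sub_sum_range_le_exp_one_div_factorial
  simpa using hab

/-- Core approximation step behind Theorem 1: for every integer `t ≥ 1` there exist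
`m ≤ t(t+1)/2` and functions `u₁,…,u_m, v₁,…,v_m : ℝ² → ℂ` such that for all
`a, b ∈ ℝ²` with `|a·b| ≤ 1`,
`|exp(i a·b) − Σ_{k=1}^m u_k(a) v_k(b)| ≤ e/t!`. -/
theorem inner_exp_separable_approx (t : ℕ) (ht : 1 ≤ t) :
    ∃ m : ℕ, m ≤ t * (t + 1) / 2 ∧
      ∃ (u : Fin m → EuclideanSpace ℝ (Fin 2) → ℂ)
        (v : Fin m → EuclideanSpace ℝ (Fin 2) → ℂ),
        ∀ a b : EuclideanSpace ℝ (Fin 2), |⟪a, b⟫| ≤ 1 →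
          ‖Complex.exp (Complex.I * (⟪a, b⟫ : ℝ)) - ∑ k : Fin m, u k a * v k b‖ ≤
            Real.exp 1 / (Nat.factorial t : ℝ) :=
  inner_exp_separable_approx_general t
end

section
/- Let P, m, n, t be positive integers. For each pair i, j ∈ {0,…,P−1}, let U_{ij} ∈ ℂ^{m×t} and V_{ij} ∈ ℂ^{n×t}. Define: the block matrix B ∈ ℂ^{mP×nP} whose (i,j)-th m×n block equals U_{ij} V_{ij}^*; the block-diagonal matrix U ∈ ℂ^{mP×P²t} whose i-th diagonal block is U_i = [U_{i0}, U_{i1}, …, U_{i(P−1)}] ∈ ℂ^{m×tP}; the block-diagonal matrix V ∈ ℂ^{nP×P²t} whose j-th diagonal block is V_j = [V_{0j}, V_{1j}, …, V_{(P−1)j}] ∈ ℂ^{n×tP}; and the matrix Σ ∈ ℂ^{P²t×P²t}, partitioned into P×P blocks Σ_{ij} ∈ ℂ^{Pt×Pt}, each Σ_{ij} itself partitioned into P×P blocks of size t×t, where Σ_{ij} is zero everywhere except that its (j,i)-th t×t block is the t×t identity matrix. Then B = U Σ V^* exactly. -/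
/-!
Right multiplication by the switch matrix moves the `k`-th column block `U_{ik}` of the `i`-th
diagonal block of `U` to column position `(k, i)`, and the `j`-th diagonal block of `V` holds
`V_{ij}` at exactly that position, so the only surviving term of the `(i, j)` block of
`U Σ V^*` is `U_{ij} V_{ij}^*`.
-/

open Matrix

namespace Matrix

variable {ι α β τ R : Type*} [Fintype ι] [DecidableEq ι] [Fintype τ] [Semiring R]

def blockDiagonalFromColumns (W : ι → ι → Matrix α τ R) : Matrix (ι × α) (ι × ι × τ) R :=
  of fun p q => if p.1 = q.1 then W p.1 q.2.1 p.2 q.2.2 else 0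

def switchMatrix (ι τ R : Type*) [DecidableEq ι] [DecidableEq τ] [Zero R] [One R] :
    Matrix (ι × ι × τ) (ι × ι × τ) R :=
  of fun p q => if p.2.1 = q.1 ∧ q.2.1 = p.1 ∧ p.2.2 = q.2.2 then 1 else 0

theorem blockDiagonalFromColumns_mul_switchMatrix_apply [DecidableEq τ]
    (W : ι → ι → Matrix α τ R) (i : ι) (a : α) (k l : ι) (s : τ) :
    (blockDiagonalFromColumns W * switchMatrix ι τ R) (i, a) (k, l, s) =
      if l = i then W i k a s else 0 := by
  simp [blockDiagonalFromColumns, switchMatrix, mul_apply, Fintype.sum_prod_type, ite_and,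
    eq_comm]

theorem mul_conjTranspose_blockDiagonalFromColumns_apply [StarRing R] {γ : Type*}
    (M : Matrix γ (ι × ι × τ) R) (W : ι → ι → Matrix β τ R) (p : γ) (j : ι) (b : β) :
    (M * (blockDiagonalFromColumns W)ᴴ) p (j, b) = ∑ l, ∑ s, M p (j, l, s) * star (W j l b s) := by
  simp [blockDiagonalFromColumns, mul_apply, Fintype.sum_prod_type, apply_ite]

theorem blockDiagonalFromColumns_mul_switchMatrix_mul_conjTranspose [DecidableEq τ] [StarRing R]
    (U : ι → ι → Matrix α τ R) (V : ι → ι → Matrix β τ R) :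
    blockDiagonalFromColumns U * switchMatrix ι τ R * (blockDiagonalFromColumns fun j i => V i j)ᴴ =
      of fun p q => (U p.1 q.1 * (V p.1 q.1)ᴴ) p.2 q.2 := by
  ext ⟨i, a⟩ ⟨j, b⟩
  simp only [mul_conjTranspose_blockDiagonalFromColumns_apply,
    blockDiagonalFromColumns_mul_switchMatrix_apply, of_apply]
  simp [mul_apply]

end Matrix

theorem butterfly_factorization_general (P m n t : ℕ)
    (Ublk : Fin P → Fin P → Matrix (Fin m) (Fin t) ℂ)
    (Vblk : Fin P → Fin P → Matrix (Fin n) (Fin t) ℂ)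
    (B : Matrix (Fin P × Fin m) (Fin P × Fin n) ℂ)
    (hB : B = Matrix.of fun p q => (Ublk p.1 q.1 * (Vblk p.1 q.1)ᴴ) p.2 q.2)
    (U : Matrix (Fin P × Fin m) (Fin P × Fin P × Fin t) ℂ)
    (hU : U = Matrix.of fun p q => if p.1 = q.1 then Ublk p.1 q.2.1 p.2 q.2.2 else 0)
    (V : Matrix (Fin P × Fin n) (Fin P × Fin P × Fin t) ℂ)
    (hV : V = Matrix.of fun p q => if p.1 = q.1 then Vblk q.2.1 p.1 p.2 q.2.2 else 0)
    (Sw : Matrix (Fin P × Fin P × Fin t) (Fin P × Fin P × Fin t) ℂ)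
    (hSw : Sw = Matrix.of fun p q =>
      if p.2.1 = q.1 ∧ q.2.1 = p.1 ∧ p.2.2 = q.2.2 then 1 else 0) :
    B = U * Sw * Vᴴ := by
  subst hB hU hV hSw
  exact (blockDiagonalFromColumns_mul_switchMatrix_mul_conjTranspose Ublk Vblk).symm

/-- The exact butterfly-type factorization underlying SwitchNet: if `B` is the `P×P`
block matrix whose `(i,j)`-th `m×n` block is `U_{ij} V_{ij}^*`, `U` is the block-diagonal
matrix with `i`-th diagonal block `[U_{i0},…,U_{i(P−1)}]`, `V` is the block-diagonal
matrix with `j`-th diagonal block `[V_{0j},…,V_{(P−1)j}]`, and `Σ` is the switch matrix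
whose `(i,j)`-th `Pt×Pt` block is zero except for the `t×t` identity in its `(j,i)`-th
`t×t` sub-block, then `B = U Σ V^*` exactly. -/
theorem butterfly_factorization (P m n t : ℕ)
    (hP : 0 < P) (hm : 0 < m) (hn : 0 < n) (ht : 0 < t)
    (Ublk : Fin P → Fin P → Matrix (Fin m) (Fin t) ℂ)
    (Vblk : Fin P → Fin P → Matrix (Fin n) (Fin t) ℂ)
    (B : Matrix (Fin P × Fin m) (Fin P × Fin n) ℂ)
    (hB : B = Matrix.of fun p q => (Ublk p.1 q.1 * (Vblk p.1 q.1)ᴴ) p.2 q.2)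
    (U : Matrix (Fin P × Fin m) (Fin P × Fin P × Fin t) ℂ)
    (hU : U = Matrix.of fun p q => if p.1 = q.1 then Ublk p.1 q.2.1 p.2 q.2.2 else 0)
    (V : Matrix (Fin P × Fin n) (Fin P × Fin P × Fin t) ℂ)
    (hV : V = Matrix.of fun p q => if p.1 = q.1 then Vblk q.2.1 p.1 p.2 q.2.2 else 0)
    (Sw : Matrix (Fin P × Fin P × Fin t) (Fin P × Fin P × Fin t) ℂ)
    (hSw : Sw = Matrix.of fun p q =>
      if p.2.1 = q.1 ∧ q.2.1 = p.1 ∧ p.2.2 = q.2.2 then 1 else 0) :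
    B = U * Sw * Vᴴ :=
  butterfly_factorization_general P m n t Ublk Vblk B hB U hU V hV Sw hSw
end
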